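/- lim_{n→∞} S_{A₁^{(n)}} / ( |p log₂ p + q log₂ q| · n ) = 1 (Theorem 1, part 3, first limit). Note |p log₂ p + q log₂ q| > 0 since 0 < p < 1, which follows from abcd ≠ 0. -/

import Mathlib

open Matrix Filter
open scoped BigOperators Classical

noncomputable section

/-- Index in `Fin 2` of a direction: `false` ↔ `-1` (index `0`), `true` ↔ `1` (index `1`). -/
def bidx (b : Bool) : Fin 2 := if b then 1 else 0

/-- The standard basis vector `e_j`, `j ∈ {-1,1}`, of `ℂ²`. -/
def eVec (b : Bool) : Fin 2 → ℂ := fun i => if i = bidx b then 1 else 0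

/-- The projection `e_j e_j†`. -/
def projC (b : Bool) : Matrix (Fin 2) (Fin 2) ℂ :=
  Matrix.single (bidx b) (bidx b) 1

/-- `P_j = e_j e_j† U`. -/
def pMat (U : Matrix (Fin 2) (Fin 2) ℂ) (b : Bool) : Matrix (Fin 2) (Fin 2) ℂ :=
  projC b * U

/-- The weight of a path `ξ = (ξ_n, …, ξ_1)` (here `ξ i` is step `i+1`):
`w(ξ) = P_{ξ_n} ⋯ P_{ξ_1} φ₀`. -/
def weight (U : Matrix (Fin 2) (Fin 2) ℂ) (φ₀ : Fin 2 → ℂ) {n : ℕ} (ξ : Fin n → Bool) :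
    Fin 2 → ℂ :=
  ((List.ofFn fun i => pMat U (ξ i)).reverse.prod).mulVec φ₀

/-- The complex inner product `⟨v, w⟩`, conjugate-linear in the first slot. -/
def cdot (v w : Fin 2 → ℂ) : ℂ := ∑ i, (starRingEnd ℂ) (v i) * w i

/-- The decoherence matrix restricted to a set `A` of pairs of paths. -/
def decMat (U : Matrix (Fin 2) (Fin 2) ℂ) (φ₀ : Fin 2 → ℂ) {n : ℕ}
    (A : Set ((Fin n → Bool) × (Fin n → Bool))) :
    Matrix (Fin n → Bool) (Fin n → Bool) ℂ :=
  Matrix.of fun ξ η =>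
    if (ξ, η) ∈ A then cdot (weight U φ₀ ξ) (weight U φ₀ η) else 0

/-- `ξ_1 + ⋯ + ξ_n ∈ ℤ`, each step being `±1`. -/
def pathSum {n : ℕ} (ξ : Fin n → Bool) : ℤ := ∑ i, (if ξ i then 1 else -1)

/-- `A₀^{(n)}`: pairs of paths with the same final direction (paths have length `n+1`). -/
def A0 (n : ℕ) : Set ((Fin (n+1) → Bool) × (Fin (n+1) → Bool)) :=
  {x | x.1 (Fin.last n) = x.2 (Fin.last n)}

/-- `A_P^{(n)}`: pairs of paths with the same final direction and the same endpoint. -/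
def AP (n : ℕ) : Set ((Fin (n+1) → Bool) × (Fin (n+1) → Bool)) :=
  {x | x.1 (Fin.last n) = x.2 (Fin.last n) ∧ pathSum x.1 = pathSum x.2}

/-- `A₁^{(n)}`: the diagonal pairs. -/
def A1 (n : ℕ) : Set ((Fin (n+1) → Bool) × (Fin (n+1) → Bool)) :=
  {x | x.1 = x.2}

/-- The von Neumann entropy `S(D) = −Σᵢ λᵢ log₂ λᵢ`, summing over the eigenvalues with
multiplicity (the roots of the characteristic polynomial; they are real for a PSD Hermitian
matrix), with the convention `0 · log₂ 0 = 0`. -/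
def vnEntropy {I : Type*} [Fintype I] [DecidableEq I] (D : Matrix I I ℂ) : ℝ :=
  -((D.charpoly.roots).map fun lam => lam.re * Real.logb 2 lam.re).sum

/-- The real projection `e_j e_j†`. -/
def projR (b : Bool) : Matrix (Fin 2) (Fin 2) ℝ :=
  Matrix.single (bidx b) (bidx b) 1

/-- The stochastic matrix `M = [[p, q], [q, p]]` of the correlated random walk, `q = 1 − p`. -/
def rwM (p : ℝ) : Matrix (Fin 2) (Fin 2) ℝ := !![p, 1-p; 1-p, p]

/-- The initial vector `φ = (q₀, p₀)ᵀ` of the correlated random walk, `q₀ = 1 − p₀`. -/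
def rwφ (p₀ : ℝ) : Fin 2 → ℝ := ![1 - p₀, p₀]

/-- `P̃_{ξ_n} ⋯ P̃_{ξ_2} φ_{ξ_1}`, where `P̃_j = e_j e_j† M` and `φ_j = e_j e_j† φ`. -/
def rwVec (p p₀ : ℝ) : {n : ℕ} → (Fin n → Bool) → (Fin 2 → ℝ)
  | 0, _ => rwφ p₀
  | n + 1, ξ =>
      ((List.ofFn fun i : Fin n => projR (ξ i.succ) * rwM p).reverse.prod).mulVec
        ((projR (ξ 0)).mulVec (rwφ p₀))

/-- `p_L^{(n)}(j)`: the probability that the `(p₀,p)`-correlated random walk is at `j`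
at time `n`, having arrived from the left. -/
def pL (p p₀ : ℝ) (n : ℕ) (j : ℤ) : ℝ :=
  ∑ ξ ∈ Finset.univ.filter (fun ξ : Fin n → Bool => pathSum ξ = j), rwVec p p₀ ξ 0

/-- `p_R^{(n)}(j)`: the probability that the `(p₀,p)`-correlated random walk is at `j`
at time `n`, having arrived from the right. -/
def pR (p p₀ : ℝ) (n : ℕ) (j : ℤ) : ℝ :=
  ∑ ξ ∈ Finset.univ.filter (fun ξ : Fin n → Bool => pathSum ξ = j), rwVec p p₀ ξ 1


/-!
On the diagonal `A₁` the decoherence matrix is diagonal, with eigenvalues `‖w(ξ)‖²`. Since each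
`P_j` projects onto a coordinate axis, `w(ξ)` is a multiple of `e_{ξ_n}` whose squared modulus is
the probability of `ξ` under the Markov chain with initial law `|(Uφ₀)_j|²` and transition
probabilities `|U_{ij}|²`; by unitarity these form the matrix `[[p, q], [q, p]]`. The entropy of a
Markov path adds the entropy `H(p)` of a transition column at every step, so
`S_{A₁^{(n)}} = H₀ + n H(p)` bits and the ratio tends to `1`.
-/

section MarkovChain

variable {S R : Type*}

def chainWeight [CommMonoid R] (μ : S → R) (T : S → S → R) {n : ℕ} (ξ : Fin (n + 1) → S) : R :=
  μ (ξ 0) * ∏ k : Fin n, T (ξ k.succ) (ξ k.castSucc)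

theorem chainWeight_snoc [CommMonoid R] (μ : S → R) (T : S → S → R) {n : ℕ}
    (ζ : Fin (n + 1) → S) (s : S) :
    chainWeight μ T (Fin.snoc ζ s : Fin (n + 2) → S) = T s (ζ (Fin.last n)) * chainWeight μ T ζ := by
  have h0 : (Fin.snoc ζ s : Fin (n + 2) → S) 0 = ζ 0 := Fin.snoc_castSucc (i := 0) ..
  simp only [chainWeight, Fin.prod_univ_castSucc, Fin.succ_castSucc, Fin.snoc_castSucc,
    Fin.succ_last, Fin.snoc_last, h0]
  rw [mul_comm (∏ _, _), mul_left_comm]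

theorem map_chainWeight {F R' : Type*} [CommMonoid R] [CommMonoid R'] [FunLike F R R']
    [MonoidHomClass F R R'] (f : F) (μ : S → R) (T : S → S → R) {n : ℕ} (ξ : Fin (n + 1) → S) :
    f (chainWeight μ T ξ) = chainWeight (f ∘ μ) (fun i j => f (T i j)) ξ := by
  simp [chainWeight, map_prod]

variable [Fintype S]

theorem Fin.sum_pi_snoc {M : Type*} [AddCommMonoid M] {n : ℕ} (f : (Fin (n + 1) → S) → M) :
    ∑ ξ, f ξ = ∑ ζ : Fin n → S, ∑ s, f (Fin.snoc ζ s) := by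
  rw [← (Fin.snocEquiv fun _ => S).sum_comp, Fintype.sum_prod_type, Finset.sum_comm]
  rfl

theorem sum_chainWeight_fin_one [CommMonoid R] {M : Type*} [AddCommMonoid M] (μ : S → R)
    (T : S → S → R) (g : R → M) :
    ∑ ξ : Fin 1 → S, g (chainWeight μ T ξ) = ∑ s, g (μ s) := by
  rw [← (Equiv.funUnique (Fin 1) S).symm.sum_comp]
  simp [chainWeight]

theorem sum_chainWeight_eq_one (μ : S → ℝ) (T : S → S → ℝ) (hμ : ∑ s, μ s = 1)
    (hT : ∀ j, ∑ i, T i j = 1) (n : ℕ) : ∑ ξ : Fin (n + 1) → S, chainWeight μ T ξ = 1 := by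
  induction n with
  | zero => exact (sum_chainWeight_fin_one μ T id).trans hμ
  | succ n ih =>
    rw [Fin.sum_pi_snoc, ← ih]
    refine Finset.sum_congr rfl fun ζ _ => ?_
    simp_rw [chainWeight_snoc, ← Finset.sum_mul, hT, one_mul]

theorem sum_negMulLog_chainWeight (μ : S → ℝ) (T : S → S → ℝ) (hμ : ∑ s, μ s = 1)
    (hT : ∀ j, ∑ i, T i j = 1) {h : ℝ} (hh : ∀ j, ∑ i, Real.negMulLog (T i j) = h) (n : ℕ) :
    ∑ ξ : Fin (n + 1) → S, Real.negMulLog (chainWeight μ T ξ) =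
      ∑ s, Real.negMulLog (μ s) + n * h := by
  induction n with
  | zero => simpa using sum_chainWeight_fin_one μ T Real.negMulLog
  | succ n ih =>
    have step : ∀ ζ : Fin (n + 1) → S, ∑ s, Real.negMulLog (chainWeight μ T (Fin.snoc ζ s)) =
        chainWeight μ T ζ * h + Real.negMulLog (chainWeight μ T ζ) := by
      intro ζ
      simp_rw [chainWeight_snoc, Real.negMulLog_mul, Finset.sum_add_distrib, ← Finset.mul_sum,
        ← Finset.sum_mul, hh, hT, one_mul]
    rw [Fin.sum_pi_snoc, Finset.sum_congr rfl fun ζ _ => step ζ, Finset.sum_add_distrib,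
      ← Finset.sum_mul, sum_chainWeight_eq_one μ T hμ hT, ih]
    push_cast
    ring

end MarkovChain

theorem weight_of_fin_zero (U : Matrix (Fin 2) (Fin 2) ℂ) (φ₀ : Fin 2 → ℂ) (ξ : Fin 0 → Bool) :
    weight U φ₀ ξ = φ₀ := by
  simp [weight]

theorem weight_snoc (U : Matrix (Fin 2) (Fin 2) ℂ) (φ₀ : Fin 2 → ℂ) {n : ℕ} (ζ : Fin n → Bool)
    (b : Bool) : weight U φ₀ (Fin.snoc ζ b : Fin (n + 1) → Bool) = pMat U b *ᵥ weight U φ₀ ζ := by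
  simp only [weight, List.ofFn_succ', Fin.snoc_castSucc, Fin.snoc_last, List.concat_eq_append,
    List.reverse_append, List.reverse_singleton, List.singleton_append, List.prod_cons,
    Matrix.mulVec_mulVec]

theorem pMat_mulVec (U : Matrix (Fin 2) (Fin 2) ℂ) (b : Bool) (v : Fin 2 → ℂ) :
    pMat U b *ᵥ v = Pi.single (bidx b) ((U *ᵥ v) (bidx b)) := by
  rw [pMat, ← Matrix.mulVec_mulVec, projC, Matrix.single_mulVec, one_mul]
  rfl

theorem weight_eq_single_chainWeight (U : Matrix (Fin 2) (Fin 2) ℂ) (φ₀ : Fin 2 → ℂ) {n : ℕ}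
    (ξ : Fin (n + 1) → Bool) :
    weight U φ₀ ξ = Pi.single (bidx (ξ (Fin.last n)))
      (chainWeight (fun s => (U *ᵥ φ₀) (bidx s)) (fun i j => U (bidx i) (bidx j)) ξ) := by
  induction n with
  | zero =>
    obtain ⟨ζ, b, rfl⟩ : ∃ ζ b, ξ = Fin.snoc ζ b :=
      ⟨Fin.init ξ, ξ (Fin.last _), (Fin.snoc_init_self ξ).symm⟩
    rw [weight_snoc, weight_of_fin_zero, pMat_mulVec, Fin.snoc_last]
    simp only [chainWeight, Finset.univ_eq_empty, Finset.prod_empty, mul_one]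
    rfl
  | succ n ih =>
    obtain ⟨ζ, b, rfl⟩ : ∃ ζ b, ξ = Fin.snoc ζ b :=
      ⟨Fin.init ξ, ξ (Fin.last _), (Fin.snoc_init_self ξ).symm⟩
    simp only [weight_snoc, ih, pMat_mulVec, Matrix.mulVec, dotProduct_single, chainWeight_snoc,
      Fin.snoc_last]

theorem cdot_single_self (i : Fin 2) (z : ℂ) :
    cdot (Pi.single i z) (Pi.single i z) = Complex.normSq z := by
  rw [cdot, Finset.sum_eq_single i (fun j _ hj => by simp [hj]) (by simp), Pi.single_eq_same,
    Complex.normSq_eq_conj_mul_self]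

theorem decMat_A1 (U : Matrix (Fin 2) (Fin 2) ℂ) (φ₀ : Fin 2 → ℂ) (n : ℕ) :
    decMat U φ₀ (A1 n) = Matrix.diagonal fun ξ => cdot (weight U φ₀ ξ) (weight U φ₀ ξ) := by
  ext ξ η
  by_cases h : ξ = η
  · subst h; simp [decMat, A1]
  · simp [decMat, A1, h]

theorem decMat_A1_eq_diagonal_chainWeight (U : Matrix (Fin 2) (Fin 2) ℂ) (φ₀ : Fin 2 → ℂ)
    (n : ℕ) :
    decMat U φ₀ (A1 n) = Matrix.diagonal fun ξ => ((chainWeight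
      (fun s => Complex.normSq ((U *ᵥ φ₀) (bidx s)))
      (fun i j => Complex.normSq (U (bidx i) (bidx j))) ξ : ℝ) : ℂ) := by
  simp only [decMat_A1, weight_eq_single_chainWeight, cdot_single_self, map_chainWeight]
  rfl

theorem vnEntropy_diagonal_ofReal {I : Type*} [Fintype I] [DecidableEq I] (f : I → ℝ) :
    vnEntropy (Matrix.diagonal fun i => (f i : ℂ)) = (∑ i, Real.negMulLog (f i)) / Real.log 2 := by
  have hroots : (∏ i, (Polynomial.X - Polynomial.C (f i : ℂ))).roots =
      Finset.univ.val.map fun i => (f i : ℂ) := by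
    simpa [Multiset.map_map, Function.comp_def] using
      Polynomial.roots_multiset_prod_X_sub_C (Finset.univ.val.map fun i => (f i : ℂ))
  rw [vnEntropy, Matrix.charpoly_diagonal, hroots, Multiset.map_map, ← Finset.sum_eq_multiset_sum,
    Finset.sum_div, ← Finset.sum_neg_distrib]
  simp [Real.negMulLog, Real.logb, neg_div, mul_div_assoc]

section Unitary

variable {ι : Type*} [Fintype ι] [DecidableEq ι] {U : Matrix ι ι ℂ}

theorem sum_normSq_mulVec_of_mem_unitaryGroup (hU : U ∈ Matrix.unitaryGroup ι ℂ) (v : ι → ℂ) :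
    ∑ i, Complex.normSq ((U *ᵥ v) i) = ∑ i, Complex.normSq (v i) := by
  have hnorm : star (U *ᵥ v) ⬝ᵥ (U *ᵥ v) = star v ⬝ᵥ v := by
    rw [Matrix.star_mulVec, ← Matrix.dotProduct_mulVec, Matrix.mulVec_mulVec,
      ← Matrix.star_eq_conjTranspose, Matrix.mem_unitaryGroup_iff'.mp hU, Matrix.one_mulVec]
  apply Complex.ofReal_injective
  simpa [dotProduct, Complex.normSq_eq_conj_mul_self] using hnorm

theorem sum_normSq_col_of_mem_unitaryGroup (hU : U ∈ Matrix.unitaryGroup ι ℂ) (j : ι) :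
    ∑ i, Complex.normSq (U i j) = 1 := by
  simpa [Matrix.mulVec_single_one, Pi.single_apply, apply_ite Complex.normSq] using
    sum_normSq_mulVec_of_mem_unitaryGroup hU (Pi.single j 1)

theorem sum_normSq_row_of_mem_unitaryGroup (hU : U ∈ Matrix.unitaryGroup ι ℂ) (i : ι) :
    ∑ j, Complex.normSq (U i j) = 1 := by
  simpa using sum_normSq_col_of_mem_unitaryGroup (Unitary.star_mem hU) i

end Unitary

theorem normSq_entries_of_mem_unitaryGroup_two {U : Matrix (Fin 2) (Fin 2) ℂ}
    (hU : U ∈ Matrix.unitaryGroup (Fin 2) ℂ) :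
    Complex.normSq (U 0 1) = 1 - Complex.normSq (U 0 0) ∧
      Complex.normSq (U 1 0) = 1 - Complex.normSq (U 0 0) ∧
      Complex.normSq (U 1 1) = Complex.normSq (U 0 0) := by
  have col₀ := sum_normSq_col_of_mem_unitaryGroup hU 0
  have col₁ := sum_normSq_col_of_mem_unitaryGroup hU 1
  have row₀ := sum_normSq_row_of_mem_unitaryGroup hU 0
  simp only [Fin.sum_univ_two] at col₀ col₁ row₀
  refine ⟨?_, ?_, ?_⟩ <;> linarith

theorem sum_negMulLog_normSq_col_of_mem_unitaryGroup_two {U : Matrix (Fin 2) (Fin 2) ℂ}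
    (hU : U ∈ Matrix.unitaryGroup (Fin 2) ℂ) (j : Fin 2) :
    ∑ i, Real.negMulLog (Complex.normSq (U i j)) = Real.binEntropy (Complex.normSq (U 0 0)) := by
  obtain ⟨h01, h10, h11⟩ := normSq_entries_of_mem_unitaryGroup_two hU
  rw [Real.binEntropy_eq_negMulLog_add_negMulLog_one_sub]
  fin_cases j <;> simp [Fin.sum_univ_two, h01, h10, h11, add_comm]

theorem sum_bool_bidx {M : Type*} [AddCommMonoid M] (f : Fin 2 → M) :
    ∑ b, f (bidx b) = ∑ i, f i := by
  simp [bidx, Fin.sum_univ_two, add_comm]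

theorem vnEntropy_decMat_A1 {U : Matrix (Fin 2) (Fin 2) ℂ} (hU : U ∈ Matrix.unitaryGroup (Fin 2) ℂ)
    {φ₀ : Fin 2 → ℂ} (hφ₀ : ∑ i, Complex.normSq (φ₀ i) = 1) (n : ℕ) :
    vnEntropy (decMat U φ₀ (A1 n)) = (∑ s, Real.negMulLog (Complex.normSq ((U *ᵥ φ₀) (bidx s))) +
      n * Real.binEntropy (Complex.normSq (U 0 0))) / Real.log 2 := by
  rw [decMat_A1_eq_diagonal_chainWeight, vnEntropy_diagonal_ofReal,
    sum_negMulLog_chainWeight _ _ ?_ (fun j => ?_) (fun j => ?_) n]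
  · rw [sum_bool_bidx fun i => Complex.normSq ((U *ᵥ φ₀) i),
      sum_normSq_mulVec_of_mem_unitaryGroup hU, hφ₀]
  · rw [sum_bool_bidx fun i => Complex.normSq (U i (bidx j))]
    exact sum_normSq_col_of_mem_unitaryGroup hU _
  · rw [sum_bool_bidx fun i => Real.negMulLog (Complex.normSq (U i (bidx j)))]
    exact sum_negMulLog_normSq_col_of_mem_unitaryGroup_two hU _

theorem abs_mul_logb_add_mul_logb_one_sub {p : ℝ} (hp₀ : 0 < p) (hp₁ : p < 1) :
    |p * Real.logb 2 p + (1 - p) * Real.logb 2 (1 - p)| = Real.binEntropy p / Real.log 2 := by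
  have h : p * Real.logb 2 p + (1 - p) * Real.logb 2 (1 - p) = -(Real.binEntropy p / Real.log 2) := by
    simp only [Real.binEntropy_eq_negMulLog_add_negMulLog_one_sub, Real.negMulLog, Real.logb]
    ring
  rw [h, abs_neg, abs_of_pos (div_pos (Real.binEntropy_pos hp₀ hp₁) (Real.log_pos one_lt_two))]

theorem tendsto_add_mul_div_mul_add_one {h : ℝ} (hh : h ≠ 0) (c : ℝ) :
    Tendsto (fun n : ℕ => (c + n * h) / (h * (n + 1))) atTop (nhds 1) := by
  have hdiv : Tendsto (fun n : ℕ => (c - h) / h / ((n : ℝ) + 1)) atTop (nhds 0) :=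
    tendsto_const_nhds.div_atTop (tendsto_natCast_atTop_atTop.atTop_add tendsto_const_nhds)
  have hlim : Tendsto (fun n : ℕ => 1 + (c - h) / h / ((n : ℝ) + 1)) atTop (nhds 1) := by
    simpa using hdiv.const_add 1
  refine hlim.congr fun n => ?_
  field_simp
  ring

theorem tendsto_vnEntropy_decMat_A1_general
    (a b c d α β : ℂ)
    (hU : !![a, b; c, d] ∈ Matrix.unitaryGroup (Fin 2) ℂ)
    (habcd : a * b * c * d ≠ 0)
    (hφ : ‖α‖ ^ 2 + ‖β‖ ^ 2 = 1)
    (p q : ℝ)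
    (hp : p = ‖a‖ ^ 2) (hq : q = 1 - p) :
    Filter.Tendsto
      (fun n : ℕ =>
        vnEntropy (decMat !![a, b; c, d] ![α, β] (A1 n)) /
          (|p * Real.logb 2 p + q * Real.logb 2 q| * (n + 1)))
      Filter.atTop (nhds 1) := by
  have ha : a ≠ 0 := by rintro rfl; simp at habcd
  have hb : b ≠ 0 := by rintro rfl; simp at habcd
  have hpa : p = Complex.normSq (!![a, b; c, d] 0 0) := by simp [hp, Complex.sq_norm]
  have hpb : Complex.normSq b = 1 - p := by
    simpa [hpa] using (normSq_entries_of_mem_unitaryGroup_two hU).1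
  have hp₀ : 0 < p := hpa ▸ Complex.normSq_pos.mpr ha
  have hp₁ : p < 1 := by linarith [Complex.normSq_pos.mpr hb]
  have hφ' : ∑ i, Complex.normSq (![α, β] i) = 1 := by simpa [Complex.sq_norm] using hφ
  obtain ⟨H₀, hS⟩ : ∃ H₀, ∀ n : ℕ, vnEntropy (decMat !![a, b; c, d] ![α, β] (A1 n)) =
      (H₀ + n * Real.binEntropy p) / Real.log 2 :=
    ⟨_, fun n => by rw [vnEntropy_decMat_A1 hU hφ' n, ← hpa]⟩
  refine (tendsto_add_mul_div_mul_add_one (Real.binEntropy_pos hp₀ hp₁).ne' H₀).congr fun n => ?_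
  rw [hS, hq, abs_mul_logb_add_mul_logb_one_sub hp₀ hp₁]
  field_simp

/-- `lim_{n→∞} S_{A₁^{(n)}} / (|p log₂ p + q log₂ q| n) = 1`
(Theorem 1, part 3, first limit; paths of length `n+1`). -/
theorem tendsto_vnEntropy_decMat_A1
    (a b c d α β : ℂ)
    (hU : !![a, b; c, d] ∈ Matrix.unitaryGroup (Fin 2) ℂ)
    (habcd : a * b * c * d ≠ 0)
    (hφ : ‖α‖ ^ 2 + ‖β‖ ^ 2 = 1)
    (p q p₀ q₀ : ℝ)
    (hp : p = ‖a‖ ^ 2) (hq : q = 1 - p)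
    (hp₀ : p₀ = ‖c * α + d * β‖ ^ 2) (hq₀ : q₀ = 1 - p₀) :
    Filter.Tendsto
      (fun n : ℕ =>
        vnEntropy (decMat !![a, b; c, d] ![α, β] (A1 n)) /
          (|p * Real.logb 2 p + q * Real.logb 2 q| * (n + 1)))
      Filter.atTop (nhds 1) :=
  tendsto_vnEntropy_decMat_A1_general a b c d α β hU habcd hφ p q hp hq
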